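/- arXiv:1805.10698 — 6 statements merged into one kernel-verified Lean document; each statement's English description precedes it below -/
import Mathlib

section
/- Let n, t ≥ 1 and W ≥ 2 be integers. For each g ∈ {1,...,t}, let L_g(x) := ∑_{i=1}^n w_{g,i} x_i with integer weights satisfying |w_{g,i}| ≤ W, and let T_g ∈ ℤ with |T_g| ≤ W. Let v_1,...,v_t be nonpositive integers and T ∈ ℤ, and define C(x) := [∑_{g=1}^t v_g·[L_g(x) = T_g] ≥ T] and, for each prime p, C^p(x) := [∑_{g=1}^t v_g·[L_g(x) ≡ T_g (mod p)] ≥ T]. Then: (a) for every x ∈ {0,1}^n and every prime p, C(x) = 0 implies C^p(x) = 0; and (b) if M is a positive integer such that the number of primes ≤ M is at least 2·t·log₂((n+1)·W), then for every x ∈ {0,1}^n with C(x) = 1, at least half of the primes p ≤ M satisfy C^p(x) = 1. (Hence C is a 'gap OR', over the primes p ≤ M, of the circuits C^p: on every input, either all C^p output 0, or at least half of them output 1.) -/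
/-!
On a Boolean input, `L_g(x) = T_g` implies `L_g(x) ≡ T_g (mod p)`, so every mod-`p` indicator
dominates the exact one, and nonpositive top weights turn this into `Cᵖ(x) ≤ C(x)`. Conversely the
two indicators differ only when `p` divides the nonzero integer `L_g(x) - T_g`, whose absolute value
is at most `(n + 1) W` and hence has at most `log₂ ((n + 1) W)` prime factors. So at most
`t · log₂ ((n + 1) W)` primes are bad for `x`, at most half of the primes up to `M`, and at every
other prime `Cᵖ(x) = C(x)`.
-/

open Finset

lemma Nat.card_primeFactors_le_log {m N : ℕ} (hmN : m ≤ N) : #m.primeFactors ≤ Nat.log 2 N := by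
  rcases Nat.eq_zero_or_pos m with rfl | hm
  · simp
  refine (Nat.le_log_iff_pow_le one_lt_two (by omega)).mpr ?_
  calc 2 ^ #m.primeFactors ≤ ∏ p ∈ m.primeFactors, p :=
        pow_card_le_prod _ _ _ fun p hp => (Nat.prime_of_mem_primeFactors hp).two_le
    _ ≤ m := Nat.le_of_dvd hm (Nat.prod_primeFactors_dvd m)
    _ ≤ N := hmN

lemma card_biUnion_primeFactors_le {ι : Type*} [Fintype ι] (z : ι → ℤ) {N : ℕ}
    (hz : ∀ i, (z i).natAbs ≤ N) :
    #(univ.biUnion fun i => (z i).natAbs.primeFactors) ≤ Fintype.card ι * Nat.log 2 N :=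
  calc #(univ.biUnion fun i => (z i).natAbs.primeFactors)
      ≤ ∑ i, #(z i).natAbs.primeFactors := card_biUnion_le
    _ ≤ ∑ _i : ι, Nat.log 2 N := sum_le_sum fun i _ => Nat.card_primeFactors_le_log (hz i)
    _ = Fintype.card ι * Nat.log 2 N := by simp

lemma Int.emod_eq_emod_iff_of_notMem_primeFactors {a b : ℤ} {p : ℕ} (hp : p.Prime)
    (h : p ∉ (a - b).natAbs.primeFactors) : a % p = b % p ↔ a = b := by
  refine ⟨fun hab => ?_, congrArg (· % (p : ℤ))⟩
  by_contra hne
  have hdvd : (p : ℤ) ∣ a - b := Int.ModEq.dvd hab.symm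
  exact h (Nat.mem_primeFactors.mpr
    ⟨hp, Int.natCast_dvd.mp hdvd, by simpa [sub_eq_zero] using hne⟩)

lemma natAbs_sum_mul_sub_le {ι : Type*} [Fintype ι] {w x : ι → ℤ} {c : ℤ} {W : ℕ}
    (hw : ∀ i, |w i| ≤ W) (hx : ∀ i, x i = 0 ∨ x i = 1) (hc : |c| ≤ W) :
    (∑ i, w i * x i - c).natAbs ≤ (Fintype.card ι + 1) * W := by
  have hterm : ∀ i, |w i * x i| ≤ W := fun i => by
    rcases hx i with h | h <;> simp [h, hw i]
  have hsum : |∑ i, w i * x i| ≤ Fintype.card ι * W :=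
    calc |∑ i, w i * x i| ≤ ∑ i, |w i * x i| := abs_sum_le_sum_abs _ _
      _ ≤ ∑ _i : ι, (W : ℤ) := sum_le_sum fun i _ => hterm i
      _ = Fintype.card ι * W := by simp
  have : |∑ i, w i * x i - c| ≤ ((Fintype.card ι + 1) * W : ℕ) := by
    push_cast
    linarith [abs_sub (∑ i, w i * x i) c]
  rwa [Int.abs_eq_natAbs, Int.ofNat_le] at this

lemma sum_mul_ite_le_of_nonpos {ι R : Type*} [Ring R] [PartialOrder R] [IsOrderedRing R]
    (s : Finset ι) {v : ι → R} (hv : ∀ i, v i ≤ 0) {P Q : ι → Prop}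
    [DecidablePred P] [DecidablePred Q] (hPQ : ∀ i, P i → Q i) :
    ∑ i ∈ s, v i * (if Q i then 1 else 0) ≤ ∑ i ∈ s, v i * (if P i then 1 else 0) := by
  refine sum_le_sum fun i _ => mul_le_mul_of_nonpos_left ?_ (hv i)
  split_ifs with hP hQ <;> first | exact le_rfl | exact zero_le_one | exact absurd (hPQ i hP) hQ

lemma Finset.card_le_two_mul_card_filter {α : Type*} [DecidableEq α] {s B : Finset α}
    {Q : α → Prop} [DecidablePred Q] (hB : 2 * #B ≤ #s) (hQ : ∀ a ∈ s, a ∉ B → Q a) :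
    #s ≤ 2 * #(s.filter Q) := by
  have hsub : s \ B ⊆ s.filter Q := fun a ha => by
    rw [mem_sdiff] at ha
    exact mem_filter.mpr ⟨ha.1, hQ a ha.1 ha.2⟩
  have := (le_card_sdiff B s).trans (card_le_card hsub)
  omega

theorem stmt_2_general (n t W : ℕ)
    (w : Fin t → Fin n → ℤ) (hw : ∀ g i, |w g i| ≤ (W : ℤ))
    (Tg : Fin t → ℤ) (hTg : ∀ g, |Tg g| ≤ (W : ℤ))
    (v : Fin t → ℤ) (hv : ∀ g, v g ≤ 0) (T : ℤ) :
    -- (a) one-sided error: C(x) = 0 implies Cᵖ(x) = 0, for every prime p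
    (∀ x : Fin n → ℤ, (∀ i, x i = 0 ∨ x i = 1) → ∀ p : ℕ, p.Prime →
      ¬ (T ≤ ∑ g, v g * (if ∑ i, w g i * x i = Tg g then 1 else 0)) →
      ¬ (T ≤ ∑ g, v g *
            (if (∑ i, w g i * x i) % (p : ℤ) = Tg g % (p : ℤ) then 1 else 0)))
    ∧
    -- (b) if C(x) = 1 then at least half of the primes p ≤ M satisfy Cᵖ(x) = 1
    (∀ M : ℕ, 0 < M →
      2 * t * Nat.log 2 ((n + 1) * W) ≤
          ((Finset.range (M + 1)).filter Nat.Prime).card →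
      ∀ x : Fin n → ℤ, (∀ i, x i = 0 ∨ x i = 1) →
        (T ≤ ∑ g, v g * (if ∑ i, w g i * x i = Tg g then 1 else 0)) →
        ((Finset.range (M + 1)).filter Nat.Prime).card ≤
          2 * (((Finset.range (M + 1)).filter Nat.Prime).filter
            (fun p : ℕ => T ≤ ∑ g, v g *
              (if (∑ i, w g i * x i) % (p : ℤ) = Tg g % (p : ℤ) then 1 else 0))).card) := by
  refine ⟨fun x _ p _ hC hCp => hC (hCp.trans (sum_mul_ite_le_of_nonpos _ hv
    fun g h => congrArg (· % (p : ℤ)) h)), fun M _ hcard x hx hC => ?_⟩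
  set z : Fin t → ℤ := fun g => ∑ i, w g i * x i - Tg g
  have hbad := card_biUnion_primeFactors_le z fun g =>
    (natAbs_sum_mul_sub_le (hw g) hx (hTg g)).trans_eq (by rw [Fintype.card_fin])
  rw [Fintype.card_fin] at hbad
  rw [mul_assoc] at hcard
  refine card_le_two_mul_card_filter (B := univ.biUnion fun g => (z g).natAbs.primeFactors)
    (by omega) fun p hp hnotBad => ?_
  have hp : p.Prime := (mem_filter.mp hp).2
  have hsame : ∀ g, (∑ i, w g i * x i) % (p : ℤ) = Tg g % (p : ℤ) ↔ ∑ i, w g i * x i = Tg g :=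
    fun g => Int.emod_eq_emod_iff_of_notMem_primeFactors hp fun h =>
      hnotBad (mem_biUnion.mpr ⟨g, mem_univ g, h⟩)
  simpa only [hsame] using hC

theorem stmt_2 (n t W : ℕ) (hn : 1 ≤ n) (ht : 1 ≤ t) (hW : 2 ≤ W)
    (w : Fin t → Fin n → ℤ) (hw : ∀ g i, |w g i| ≤ (W : ℤ))
    (Tg : Fin t → ℤ) (hTg : ∀ g, |Tg g| ≤ (W : ℤ))
    (v : Fin t → ℤ) (hv : ∀ g, v g ≤ 0) (T : ℤ) :
    -- (a) one-sided error: C(x) = 0 implies Cᵖ(x) = 0, for every prime p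
    (∀ x : Fin n → ℤ, (∀ i, x i = 0 ∨ x i = 1) → ∀ p : ℕ, p.Prime →
      ¬ (T ≤ ∑ g, v g * (if ∑ i, w g i * x i = Tg g then 1 else 0)) →
      ¬ (T ≤ ∑ g, v g *
            (if (∑ i, w g i * x i) % (p : ℤ) = Tg g % (p : ℤ) then 1 else 0)))
    ∧
    -- (b) if C(x) = 1 then at least half of the primes p ≤ M satisfy Cᵖ(x) = 1
    (∀ M : ℕ, 0 < M →
      2 * t * Nat.log 2 ((n + 1) * W) ≤
          ((Finset.range (M + 1)).filter Nat.Prime).card →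
      ∀ x : Fin n → ℤ, (∀ i, x i = 0 ∨ x i = 1) →
        (T ≤ ∑ g, v g * (if ∑ i, w g i * x i = Tg g then 1 else 0)) →
        ((Finset.range (M + 1)).filter Nat.Prime).card ≤
          2 * (((Finset.range (M + 1)).filter Nat.Prime).filter
            (fun p : ℕ => T ≤ ∑ g, v g *
              (if (∑ i, w g i * x i) % (p : ℤ) = Tg g % (p : ℤ) then 1 else 0))).card) :=
  stmt_2_general n t W w hw Tg hTg v hv T
end

section
/- Let n, t ≥ 1 and W ≥ 1 be integers. For each g ∈ {1,...,t}, let L_g(x) := ∑_{i=1}^n w_{g,i} x_i with integer weights satisfying |w_{g,i}| ≤ W, and let T_g ∈ ℤ with |T_g| ≤ W. If M is a positive integer such that the number of primes ≤ M is strictly greater than t·2^n·log₂((n+1)·W), then there exists a prime m ≤ M such that for every x ∈ {0,1}^n and every g ∈ {1,...,t}: L_g(x) ≡ T_g (mod m) if and only if L_g(x) = T_g. -/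
/-!
A prime `m` can only turn the false equation `L_g(x) = T_g` into a true congruence if it divides
the nonzero integer `L_g(x) - T_g`, whose absolute value is at most `(n + 1) W`. Such an integer
has at most `log₂ ((n + 1) W)` distinct prime factors, since each is at least `2`. Over the
`t 2^n` pairs `(g, x)` this rules out at most `t 2^n log₂ ((n + 1) W)` primes, fewer than there
are primes up to `M`.
-/

open Finset

lemma Nat.card_primeFactors_le_log_s4 (d : ℕ) : #d.primeFactors ≤ Nat.log 2 d := by
  rcases eq_or_ne d 0 with rfl | hd
  · simp
  rw [Nat.le_log_iff_pow_le one_lt_two hd]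
  calc 2 ^ #d.primeFactors ≤ ∏ p ∈ d.primeFactors, p :=
        pow_card_le_prod _ _ _ fun p hp => (Nat.prime_of_mem_primeFactors hp).two_le
    _ ≤ d := Nat.le_of_dvd (Nat.pos_of_ne_zero hd) (Nat.prod_primeFactors_dvd d)

lemma exists_prime_mem_forall_dvd_imp_eq_zero {ι : Type*} [Fintype ι] (f : ι → ℤ) (N : ℕ)
    (hf : ∀ i, |f i| ≤ N) (S : Finset ℕ) (hS : ∀ p ∈ S, p.Prime)
    (hcard : Fintype.card ι * Nat.log 2 N < #S) :
    ∃ p ∈ S, ∀ i, (p : ℤ) ∣ f i → f i = 0 := by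
  set bad := univ.biUnion fun i => (f i).natAbs.primeFactors
  have hbad : #bad ≤ Fintype.card ι * Nat.log 2 N := by
    calc #bad ≤ ∑ i, #(f i).natAbs.primeFactors := card_biUnion_le
      _ ≤ ∑ _i : ι, Nat.log 2 N := by
          refine sum_le_sum fun i _ => (Nat.card_primeFactors_le_log_s4 _).trans
            (Nat.log_mono_right ?_)
          have := hf i
          rw [Int.abs_eq_natAbs] at this
          exact_mod_cast this
      _ = Fintype.card ι * Nat.log 2 N := by simp
  obtain ⟨p, hpS, hpbad⟩ := exists_mem_notMem_of_card_lt_card (hbad.trans_lt hcard)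
  refine ⟨p, hpS, fun i hdvd => by_contra fun hne => hpbad ?_⟩
  exact mem_biUnion.mpr ⟨i, mem_univ _, Nat.mem_primeFactors.mpr
    ⟨hS p hpS, Int.natCast_dvd.mp hdvd, Int.natAbs_ne_zero.mpr hne⟩⟩

lemma abs_sum_sub_le {ι : Type*} (s : Finset ι) (w : ι → ℤ) (T W : ℤ)
    (hw : ∀ i ∈ s, |w i| ≤ W) (hT : |T| ≤ W) : |∑ i ∈ s, w i - T| ≤ (#s + 1) * W := by
  calc |∑ i ∈ s, w i - T| ≤ |∑ i ∈ s, w i| + |T| := abs_sub _ _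
    _ ≤ ∑ i ∈ s, |w i| + |T| := by gcongr; exact abs_sum_le_sum_abs _ _
    _ ≤ #s • W + W := by gcongr; exact sum_le_card_nsmul s _ _ hw
    _ = (#s + 1) * W := by rw [nsmul_eq_mul]; ring

lemma sum_mul_eq_sum_filter_of_zero_or_one {ι : Type*} [Fintype ι] (w x : ι → ℤ)
    (hx : ∀ i, x i = 0 ∨ x i = 1) : ∑ i, w i * x i = ∑ i with x i = 1, w i := by
  rw [sum_filter]
  refine sum_congr rfl fun i _ => ?_
  rcases hx i with h | h <;> simp [h]

lemma Int.modEq_iff_eq_of_dvd_sub_imp {a b m : ℤ} (h : m ∣ a - b → a - b = 0) :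
    a ≡ b [ZMOD m] ↔ a = b := by
  refine ⟨fun hab => sub_eq_zero.mp (h ?_), fun hab => hab ▸ rfl⟩
  exact dvd_sub_comm.mp (Int.modEq_iff_dvd.mp hab)

theorem stmt_4_general (n t W : ℕ)
    (w : Fin t → Fin n → ℤ) (hw : ∀ g i, |w g i| ≤ (W : ℤ))
    (Tg : Fin t → ℤ) (hTg : ∀ g, |Tg g| ≤ (W : ℤ))
    (M : ℕ)
    (hcard : t * 2 ^ n * Nat.log 2 ((n + 1) * W) <
      ((Finset.range (M + 1)).filter Nat.Prime).card) :
    ∃ m : ℕ, m ≤ M ∧ m.Prime ∧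
      ∀ x : Fin n → ℤ, (∀ i, x i = 0 ∨ x i = 1) → ∀ g : Fin t,
        ((∑ i, w g i * x i) ≡ Tg g [ZMOD (m : ℤ)] ↔ (∑ i, w g i * x i) = Tg g) := by
  -- a 0/1 vector `x` is encoded by its support, so the pairs `(g, x)` are `Fin t × Finset (Fin n)`
  have hf (q : Fin t × Finset (Fin n)) :
      |∑ i ∈ q.2, w q.1 i - Tg q.1| ≤ ((n + 1) * W : ℕ) := by
    push_cast
    refine (abs_sum_sub_le _ _ _ _ (fun i _ => hw q.1 i) (hTg q.1)).trans ?_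
    gcongr
    exact_mod_cast card_finset_fin_le q.2
  obtain ⟨m, hmS, hm⟩ := exists_prime_mem_forall_dvd_imp_eq_zero _ _ hf _
    (fun p hp => (mem_filter.mp hp).2) (by simpa using hcard)
  obtain ⟨hmM, hmp⟩ := mem_filter.mp hmS
  refine ⟨m, Nat.lt_succ_iff.mp (mem_range.mp hmM), hmp, fun x hx g => ?_⟩
  rw [sum_mul_eq_sum_filter_of_zero_or_one _ _ hx]
  exact Int.modEq_iff_eq_of_dvd_sub_imp (hm (g, _))

theorem stmt_4 (n t W : ℕ) (hn : 1 ≤ n) (ht : 1 ≤ t) (hW : 1 ≤ W)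
    (w : Fin t → Fin n → ℤ) (hw : ∀ g i, |w g i| ≤ (W : ℤ))
    (Tg : Fin t → ℤ) (hTg : ∀ g, |Tg g| ≤ (W : ℤ))
    (M : ℕ) (hM : 0 < M)
    (hcard : t * 2 ^ n * Nat.log 2 ((n + 1) * W) <
      ((Finset.range (M + 1)).filter Nat.Prime).card) :
    ∃ m : ℕ, m ≤ M ∧ m.Prime ∧
      ∀ x : Fin n → ℤ, (∀ i, x i = 0 ∨ x i = 1) → ∀ g : Fin t,
        ((∑ i, w g i * x i) ≡ Tg g [ZMOD (m : ℤ)] ↔ (∑ i, w g i * x i) = Tg g) :=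
  stmt_4_general n t W w hw Tg hTg M hcard
end

section
/- Let d, B, D ≥ 1 be integers, and let a_1,...,a_d and T be nonnegative integers, each strictly less than 2^{B·D}. For j ∈ {1,...,D}, define the j-th B-bit blocks (counted from the least significant bit) a_{i,j} := ⌊a_i / 2^{B(j−1)}⌋ mod 2^B and T_j := ⌊T / 2^{B(j−1)}⌋ mod 2^B. Then ∑_{i=1}^d a_i = T if and only if there exists a sequence of integers c_0, c_1, ..., c_D with c_0 = c_D = 0 and 0 ≤ c_j ≤ d−1 for all 1 ≤ j ≤ D−1, such that for every j ∈ {1,...,D}: ∑_{i=1}^d a_{i,j} + c_{j−1} = T_j + 2^B·c_j. Moreover, when such a sequence of carries exists, it is unique. -/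
/-!
Reading the block equations as base-`b` column addition with carries, the equations for the
blocks below `j` together with `c 0 = 0` are equivalent to
`∑ i, a i % b ^ j = T % b ^ j + b ^ j * c j`. This pins each carry down (uniqueness), and
since every `a i % b ^ j` is less than `b ^ j` it bounds the carry by `d - 1`. At `j = D` the
remainders are the numbers themselves, so `∑ i, a i = T` exactly when the last carry vanishes.
Conversely, if `∑ i, a i = T`, the carries `c j := (∑ i, a i % b ^ j) / b ^ j` satisfy the
invariant.
-/

open Finset

namespace BlockCarry

variable {d D b : ℕ} {a : Fin d → ℕ} {T : ℕ}

lemma sum_mod_pow_succ (n : ℕ) :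
    ∑ i, a i % b ^ (n + 1) = ∑ i, a i % b ^ n + b ^ n * ∑ i, a i / b ^ n % b := by
  simp only [Nat.mod_pow_succ, sum_add_distrib, mul_sum]

lemma sum_mod_pow_eq_of_carries {c : Fin (D + 1) → ℕ} (h0 : c 0 = 0)
    (hc : ∀ j : Fin D, (∑ i, a i / b ^ (j : ℕ) % b) + c j.castSucc
      = T / b ^ (j : ℕ) % b + b * c j.succ) (j : Fin (D + 1)) :
    ∑ i, a i % b ^ (j : ℕ) = T % b ^ (j : ℕ) + b ^ (j : ℕ) * c j := by
  induction j using Fin.induction with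
  | zero => simp [h0, Nat.mod_one]
  | succ j ih =>
    rw [Fin.val_castSucc] at ih
    rw [Fin.val_succ, sum_mod_pow_succ, Nat.mod_pow_succ, ih, pow_succ]
    linear_combination (b ^ (j : ℕ)) * hc j

lemma carries_of_sum_mod_pow_eq (hb : 0 < b) {c : Fin (D + 1) → ℕ}
    (hc : ∀ j : Fin (D + 1), ∑ i, a i % b ^ (j : ℕ) = T % b ^ (j : ℕ) + b ^ (j : ℕ) * c j)
    (j : Fin D) :
    (∑ i, a i / b ^ (j : ℕ) % b) + c j.castSucc = T / b ^ (j : ℕ) % b + b * c j.succ := by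
  have hsucc := hc j.succ
  have hcast := hc j.castSucc
  rw [Fin.val_castSucc] at hcast
  rw [Fin.val_succ, sum_mod_pow_succ, Nat.mod_pow_succ, hcast, pow_succ] at hsucc
  refine Nat.eq_of_mul_eq_mul_left (pow_pos hb (j : ℕ)) ?_
  linear_combination hsucc

lemma sum_mod_pow_eq_of_sum_eq (hsum : ∑ i, a i = T) (n : ℕ) :
    ∑ i, a i % b ^ n = T % b ^ n + b ^ n * ((∑ i, a i % b ^ n) / b ^ n) := by
  rw [← hsum, sum_nat_mod, Nat.mod_add_div]

lemma le_sub_one_of_sum_mod_pow_eq (hb : 0 < b) {n c : ℕ}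
    (hc : ∑ i, a i % b ^ n = T % b ^ n + b ^ n * c) : c ≤ d - 1 := by
  have hpos : 0 < b ^ n := pow_pos hb n
  have hsum : b ^ n * c + d ≤ b ^ n * d :=
    calc b ^ n * c + d ≤ ∑ i, a i % b ^ n + d :=
        Nat.add_le_add_right (hc ▸ Nat.le_add_left _ _) d
      _ = ∑ i, (a i % b ^ n + 1) := by simp [sum_add_distrib]
      _ ≤ ∑ _i : Fin d, b ^ n := sum_le_sum fun i _ => Nat.mod_lt _ hpos
      _ = b ^ n * d := by simp [mul_comm]
  by_contra! hlt
  have hdc : d ≤ c ∧ 1 ≤ c := by omega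
  nlinarith

lemma sum_eq_iff_eq_zero_of_sum_mod_pow_eq (hb : 0 < b) {n c : ℕ}
    (ha : ∀ i, a i < b ^ n) (hT : T < b ^ n)
    (hc : ∑ i, a i % b ^ n = T % b ^ n + b ^ n * c) : ∑ i, a i = T ↔ c = 0 := by
  rw [sum_congr rfl fun i _ => Nat.mod_eq_of_lt (ha i), Nat.mod_eq_of_lt hT] at hc
  simp [hc, hb.ne']

end BlockCarry

open BlockCarry

theorem stmt_5_general (d B D : ℕ)
    (a : Fin d → ℕ) (T : ℕ)
    (ha : ∀ i, a i < 2 ^ (B * D)) (hT : T < 2 ^ (B * D)) :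
    -- sum equals T iff a valid carry sequence exists
    ((∑ i, a i = T) ↔
      ∃ c : Fin (D + 1) → ℕ,
        c 0 = 0 ∧ c (Fin.last D) = 0 ∧
        (∀ j : Fin (D + 1), 1 ≤ (j : ℕ) → (j : ℕ) ≤ D - 1 → c j ≤ d - 1) ∧
        (∀ j : Fin D,
          (∑ i, a i / 2 ^ (B * (j : ℕ)) % 2 ^ B) + c j.castSucc
            = T / 2 ^ (B * (j : ℕ)) % 2 ^ B + 2 ^ B * c j.succ))
    ∧
    -- when a valid carry sequence exists, it is unique
    (∀ c c' : Fin (D + 1) → ℕ,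
      (c 0 = 0 ∧ c (Fin.last D) = 0 ∧
        (∀ j : Fin (D + 1), 1 ≤ (j : ℕ) → (j : ℕ) ≤ D - 1 → c j ≤ d - 1) ∧
        (∀ j : Fin D,
          (∑ i, a i / 2 ^ (B * (j : ℕ)) % 2 ^ B) + c j.castSucc
            = T / 2 ^ (B * (j : ℕ)) % 2 ^ B + 2 ^ B * c j.succ)) →
      (c' 0 = 0 ∧ c' (Fin.last D) = 0 ∧
        (∀ j : Fin (D + 1), 1 ≤ (j : ℕ) → (j : ℕ) ≤ D - 1 → c' j ≤ d - 1) ∧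
        (∀ j : Fin D,
          (∑ i, a i / 2 ^ (B * (j : ℕ)) % 2 ^ B) + c' j.castSucc
            = T / 2 ^ (B * (j : ℕ)) % 2 ^ B + 2 ^ B * c' j.succ)) →
      c = c') := by
  simp only [pow_mul] at ha hT ⊢
  have hb : 0 < 2 ^ B := by positivity
  refine ⟨⟨fun hsum => ?_, fun ⟨c, h0, hlast, _, hc⟩ => ?_⟩,
    fun c c' ⟨h0, _, _, hc⟩ ⟨h0', _, _, hc'⟩ => ?_⟩
  · have hinv (j : Fin (D + 1)) := sum_mod_pow_eq_of_sum_eq (b := 2 ^ B) hsum j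
    refine ⟨fun j => (∑ i, a i % (2 ^ B) ^ (j : ℕ)) / (2 ^ B) ^ (j : ℕ),
      by simp [Nat.mod_one],
      (sum_eq_iff_eq_zero_of_sum_mod_pow_eq hb ha hT (hinv (Fin.last D))).1 hsum,
      fun j _ _ => le_sub_one_of_sum_mod_pow_eq hb (hinv j),
      carries_of_sum_mod_pow_eq hb hinv⟩
  · exact (sum_eq_iff_eq_zero_of_sum_mod_pow_eq hb ha hT
      (sum_mod_pow_eq_of_carries h0 hc (Fin.last D))).2 hlast
  · funext j
    have hsame := (sum_mod_pow_eq_of_carries h0 hc j).symm.trans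
      (sum_mod_pow_eq_of_carries h0' hc' j)
    exact Nat.eq_of_mul_eq_mul_left (pow_pos hb _) (Nat.add_left_cancel hsame)

theorem stmt_5 (d B D : ℕ) (hd : 1 ≤ d) (hB : 1 ≤ B) (hD : 1 ≤ D)
    (a : Fin d → ℕ) (T : ℕ)
    (ha : ∀ i, a i < 2 ^ (B * D)) (hT : T < 2 ^ (B * D)) :
    -- sum equals T iff a valid carry sequence exists
    ((∑ i, a i = T) ↔
      ∃ c : Fin (D + 1) → ℕ,
        c 0 = 0 ∧ c (Fin.last D) = 0 ∧
        (∀ j : Fin (D + 1), 1 ≤ (j : ℕ) → (j : ℕ) ≤ D - 1 → c j ≤ d - 1) ∧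
        (∀ j : Fin D,
          (∑ i, a i / 2 ^ (B * (j : ℕ)) % 2 ^ B) + c j.castSucc
            = T / 2 ^ (B * (j : ℕ)) % 2 ^ B + 2 ^ B * c j.succ))
    ∧
    -- when a valid carry sequence exists, it is unique
    (∀ c c' : Fin (D + 1) → ℕ,
      (c 0 = 0 ∧ c (Fin.last D) = 0 ∧
        (∀ j : Fin (D + 1), 1 ≤ (j : ℕ) → (j : ℕ) ≤ D - 1 → c j ≤ d - 1) ∧
        (∀ j : Fin D,
          (∑ i, a i / 2 ^ (B * (j : ℕ)) % 2 ^ B) + c j.castSucc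
            = T / 2 ^ (B * (j : ℕ)) % 2 ^ B + 2 ^ B * c j.succ)) →
      (c' 0 = 0 ∧ c' (Fin.last D) = 0 ∧
        (∀ j : Fin (D + 1), 1 ≤ (j : ℕ) → (j : ℕ) ≤ D - 1 → c' j ≤ d - 1) ∧
        (∀ j : Fin D,
          (∑ i, a i / 2 ^ (B * (j : ℕ)) % 2 ^ B) + c' j.castSucc
            = T / 2 ^ (B * (j : ℕ)) % 2 ^ B + 2 ^ B * c' j.succ)) →
      c = c') :=
  stmt_5_general d B D a T ha hT
end

section
/- For all integers d ≥ 1 and 0 ≤ m ≤ d, there exist maps φ_x, φ_y : {0,1}^d → {0,1}^{d² + 4dm} such that, setting M := 2dm − m², for all x, y ∈ {0,1}^d: if x·y = m then φ_x(x)·φ_y(y) = M, and if x·y ≠ m then φ_x(x)·φ_y(y) > M. In fact, the maps can be chosen so that φ_x(x)·φ_y(y) = (x·y − m)² + 2dm − m² for all x, y ∈ {0,1}^d. -/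
/-!
Send `x` to `(x ⊗ x, 1 - x, …, 1 - x, x, …, x)` and `y` to `(y ⊗ y, 1, …, 1, 1 - y, …, 1 - y)`,
with `2m` copies of each of the last two blocks. The blocks contribute `(x·y)²`,
`2m (d - Σ x)` and `2m (Σ x - x·y)`, which add up to `(x·y - m)² + 2dm - m²`.
-/

open Finset

section GapEmbedding

variable {ι R : Type*} [CommRing R]

abbrev GapIndex (ι : Type*) (k : ℕ) : Type _ := (ι × ι) ⊕ ((Fin k × ι) ⊕ (Fin k × ι))

def gapEmbedLeft (k : ℕ) (x : ι → R) : GapIndex ι k → R :=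
  Sum.elim (fun p => x p.1 * x p.2) (Sum.elim (fun p => 1 - x p.2) (fun p => x p.2))

def gapEmbedRight (k : ℕ) (y : ι → R) : GapIndex ι k → R :=
  Sum.elim (fun p => y p.1 * y p.2) (Sum.elim (fun _ => 1) (fun p => 1 - y p.2))

theorem sum_gapEmbedLeft_mul_gapEmbedRight [Fintype ι] (k : ℕ) (x y : ι → R) :
    ∑ s, gapEmbedLeft k x s * gapEmbedRight k y s
      = (∑ i, x i * y i) ^ 2 + k * (Fintype.card ι - ∑ i, x i * y i) := by
  have hsq : ∑ p : ι × ι, x p.1 * x p.2 * (y p.1 * y p.2) = (∑ i, x i * y i) ^ 2 := by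
    rw [sq, sum_mul_sum, Fintype.sum_prod_type]
    exact sum_congr rfl fun i _ => sum_congr rfl fun j _ => by ring
  simp only [Fintype.sum_sum_type, gapEmbedLeft, gapEmbedRight, Sum.elim_inl, Sum.elim_inr,
    hsq, Fintype.sum_prod_type, sum_const, card_univ, Fintype.card_fin, nsmul_eq_mul,
    Fintype.card_prod, Nat.cast_mul, mul_one, mul_sub, sum_sub_distrib]
  ring

theorem zero_or_one_mul {a b : R} (ha : a = 0 ∨ a = 1) (hb : b = 0 ∨ b = 1) :
    a * b = 0 ∨ a * b = 1 := by
  rcases ha with rfl | rfl <;> simp [hb]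

theorem zero_or_one_one_sub {a : R} (ha : a = 0 ∨ a = 1) : 1 - a = 0 ∨ 1 - a = 1 := by
  rcases ha with rfl | rfl <;> simp

theorem gapEmbedLeft_zero_or_one (k : ℕ) {x : ι → R} (hx : ∀ i, x i = 0 ∨ x i = 1)
    (s : GapIndex ι k) : gapEmbedLeft k x s = 0 ∨ gapEmbedLeft k x s = 1 := by
  rcases s with ⟨i, j⟩ | ⟨-, j⟩ | ⟨-, j⟩
  exacts [zero_or_one_mul (hx i) (hx j), zero_or_one_one_sub (hx j), hx j]

theorem gapEmbedRight_zero_or_one (k : ℕ) {y : ι → R} (hy : ∀ i, y i = 0 ∨ y i = 1)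
    (s : GapIndex ι k) : gapEmbedRight k y s = 0 ∨ gapEmbedRight k y s = 1 := by
  rcases s with ⟨i, j⟩ | ⟨-, j⟩ | ⟨-, j⟩
  exacts [zero_or_one_mul (hy i) (hy j), Or.inr rfl, zero_or_one_one_sub (hy j)]

end GapEmbedding

theorem stmt_7_general (d m : ℕ) :
    ∃ φx φy : (Fin d → ℤ) → (Fin (d ^ 2 + 4 * d * m) → ℤ),
      (∀ x : Fin d → ℤ, (∀ i, x i = 0 ∨ x i = 1) →
        ∀ j, φx x j = 0 ∨ φx x j = 1) ∧
      (∀ y : Fin d → ℤ, (∀ i, y i = 0 ∨ y i = 1) →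
        ∀ j, φy y j = 0 ∨ φy y j = 1) ∧
      (∀ x y : Fin d → ℤ, (∀ i, x i = 0 ∨ x i = 1) → (∀ i, y i = 0 ∨ y i = 1) →
        ∑ j, φx x j * φy y j
          = (∑ i, x i * y i - (m : ℤ)) ^ 2 + 2 * (d : ℤ) * m - (m : ℤ) ^ 2) ∧
      (∀ x y : Fin d → ℤ, (∀ i, x i = 0 ∨ x i = 1) → (∀ i, y i = 0 ∨ y i = 1) →
        ((∑ i, x i * y i = (m : ℤ) →
            ∑ j, φx x j * φy y j = 2 * (d : ℤ) * m - (m : ℤ) ^ 2) ∧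
         (∑ i, x i * y i ≠ (m : ℤ) →
            2 * (d : ℤ) * m - (m : ℤ) ^ 2 < ∑ j, φx x j * φy y j))) := by
  let e : Fin (d ^ 2 + 4 * d * m) ≃ GapIndex (Fin d) (2 * m) :=
    (finCongr (by simp; ring)).trans (Fintype.equivFin _).symm
  have key (x y : Fin d → ℤ) : ∑ j, gapEmbedLeft (2 * m) x (e j) * gapEmbedRight (2 * m) y (e j)
      = (∑ i, x i * y i - (m : ℤ)) ^ 2 + 2 * (d : ℤ) * m - (m : ℤ) ^ 2 := by
    rw [e.sum_comp (fun s => gapEmbedLeft (2 * m) x s * gapEmbedRight (2 * m) y s),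
      sum_gapEmbedLeft_mul_gapEmbedRight, Fintype.card_fin]
    push_cast
    ring
  refine ⟨fun x j => gapEmbedLeft (2 * m) x (e j), fun y j => gapEmbedRight (2 * m) y (e j),
    fun x hx j => gapEmbedLeft_zero_or_one _ hx _, fun y hy j => gapEmbedRight_zero_or_one _ hy _,
    fun x y _ _ => key x y, fun x y _ _ => ⟨fun h => ?_, fun h => ?_⟩⟩
  · rw [key, h]
    ring
  · have hpos := sq_pos_of_ne_zero (sub_ne_zero.mpr h)
    rw [key]
    linarith

theorem stmt_7 (d m : ℕ) (hd : 1 ≤ d) (hm : m ≤ d) :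
    ∃ φx φy : (Fin d → ℤ) → (Fin (d ^ 2 + 4 * d * m) → ℤ),
      (∀ x : Fin d → ℤ, (∀ i, x i = 0 ∨ x i = 1) →
        ∀ j, φx x j = 0 ∨ φx x j = 1) ∧
      (∀ y : Fin d → ℤ, (∀ i, y i = 0 ∨ y i = 1) →
        ∀ j, φy y j = 0 ∨ φy y j = 1) ∧
      (∀ x y : Fin d → ℤ, (∀ i, x i = 0 ∨ x i = 1) → (∀ i, y i = 0 ∨ y i = 1) →
        ∑ j, φx x j * φy y j
          = (∑ i, x i * y i - (m : ℤ)) ^ 2 + 2 * (d : ℤ) * m - (m : ℤ) ^ 2) ∧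
      (∀ x y : Fin d → ℤ, (∀ i, x i = 0 ∨ x i = 1) → (∀ i, y i = 0 ∨ y i = 1) →
        ((∑ i, x i * y i = (m : ℤ) →
            ∑ j, φx x j * φy y j = 2 * (d : ℤ) * m - (m : ℤ) ^ 2) ∧
         (∑ i, x i * y i ≠ (m : ℤ) →
            2 * (d : ℤ) * m - (m : ℤ) ^ 2 < ∑ j, φx x j * φy y j))) :=
  stmt_7_general d m
end

section
/- For all integers d ≥ 1 and 0 ≤ m ≤ d, there exist maps φ_x, φ_y : {0,1}^d → {0,1}^{2(d² + 4dm)} such that, setting M := (d+m)², for all x, y ∈ {0,1}^d: if x·y = m then φ_x(x)·φ_y(y) = M, and if x·y ≠ m then φ_x(x)·φ_y(y) < M. In fact, the maps can be chosen so that φ_x(x)·φ_y(y) = (d+m)² − (x·y − m)² for all x, y ∈ {0,1}^d. -/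
/-!
Tensoring a vector with itself squares inner products, `(x ⊗ x) · (y ⊗ y) = (x · y)²`, and the
complement trick `(1 - u, u) · (1, 1 - v) = n - u · v` turns this into the Boolean vector pair
with inner product `d² - (x · y)²`. Appending `2m` copies of `x` and `y` and `2dm` common ones
adds `2m (x · y) + 2dm`, which completes the square:
`d² + 2dm + 2m (x · y) - (x · y)² = (d + m)² - (x · y - m)²`.
Zero coordinates pad the length up to `2 (d² + 4dm)`.
-/

open Fintype

variable {ι κ τ μ : Type*}

def IsBoolVec (v : κ → ℤ) : Prop := ∀ i, v i = 0 ∨ v i = 1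

namespace IsBoolVec

theorem one : IsBoolVec (1 : κ → ℤ) := fun _ => Or.inr rfl

theorem zero : IsBoolVec (0 : κ → ℤ) := fun _ => Or.inl rfl

theorem one_sub {u : κ → ℤ} (hu : IsBoolVec u) : IsBoolVec (1 - u) := fun i => by
  rcases hu i with h | h <;> simp [h]

theorem comp {u : κ → ℤ} (hu : IsBoolVec u) (f : τ → κ) : IsBoolVec (u ∘ f) := fun i => hu (f i)

theorem sumElim {u : κ → ℤ} {v : τ → ℤ} (hu : IsBoolVec u) (hv : IsBoolVec v) :
    IsBoolVec (Sum.elim u v) := by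
  rintro (i | i)
  exacts [hu i, hv i]

end IsBoolVec

def selfTensor (x : ι → ℤ) : ι × ι → ℤ := fun p => x p.1 * x p.2

theorem IsBoolVec.selfTensor {x : ι → ℤ} (hx : IsBoolVec x) : IsBoolVec (selfTensor x) := by
  rintro ⟨i, j⟩
  rcases hx i with h | h <;> rcases hx j with h' | h' <;> simp [_root_.selfTensor, h, h']

theorem selfTensor_dotProduct_selfTensor [Fintype ι] (x y : ι → ℤ) :
    selfTensor x ⬝ᵥ selfTensor y = (x ⬝ᵥ y) ^ 2 := by
  simp only [dotProduct, selfTensor, Fintype.sum_prod_type, sq, Finset.sum_mul_sum]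
  exact Finset.sum_congr rfl fun i _ => Finset.sum_congr rfl fun j _ => by ring

theorem complement_dotProduct_complement [Fintype κ] (u v : κ → ℤ) :
    Sum.elim (1 - u) u ⬝ᵥ Sum.elim 1 (1 - v) = card κ - u ⬝ᵥ v := by
  rw [sumElim_dotProduct_sumElim, dotProduct_sub, sub_dotProduct, one_dotProduct_one]
  ring

theorem comp_snd_dotProduct_comp_snd [Fintype ι] [Fintype τ] (x y : ι → ℤ) :
    (x ∘ Prod.snd : τ × ι → ℤ) ⬝ᵥ (y ∘ Prod.snd) = card τ * (x ⬝ᵥ y) := by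
  simp [dotProduct, Fintype.sum_prod_type]

def padZero (e : κ ⊕ τ ≃ μ) (u : κ → ℤ) : μ → ℤ := Sum.elim u 0 ∘ e.symm

theorem IsBoolVec.padZero {u : κ → ℤ} (hu : IsBoolVec u) (e : κ ⊕ τ ≃ μ) :
    IsBoolVec (_root_.padZero e u) :=
  (hu.sumElim IsBoolVec.zero).comp _

theorem padZero_dotProduct_padZero [Fintype κ] [Fintype τ] [Fintype μ] (e : κ ⊕ τ ≃ μ) (u v : κ → ℤ) :
    padZero e u ⬝ᵥ padZero e v = u ⬝ᵥ v := by
  rw [padZero, padZero, comp_equiv_symm_dotProduct, Function.comp_assoc, e.symm_comp_self,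
    Function.comp_id, sumElim_dotProduct_sumElim, zero_dotProduct, add_zero]

section Gadget

variable (ι) [Fintype ι] (m : ℕ)

abbrev GadgetIndex : Type _ :=
  ((ι × ι) ⊕ (ι × ι)) ⊕ ((Fin (2 * m) × ι) ⊕ Fin (2 * card ι * m))

variable {ι}

def gadgetLeft (x : ι → ℤ) : GadgetIndex ι m → ℤ :=
  Sum.elim (Sum.elim (1 - selfTensor x) (selfTensor x)) (Sum.elim (x ∘ Prod.snd) 1)

def gadgetRight (y : ι → ℤ) : GadgetIndex ι m → ℤ :=
  Sum.elim (Sum.elim 1 (1 - selfTensor y)) (Sum.elim (y ∘ Prod.snd) 1)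

variable {m}

theorem IsBoolVec.gadgetLeft {x : ι → ℤ} (hx : IsBoolVec x) : IsBoolVec (gadgetLeft m x) :=
  (hx.selfTensor.one_sub.sumElim hx.selfTensor).sumElim ((hx.comp _).sumElim IsBoolVec.one)

theorem IsBoolVec.gadgetRight {y : ι → ℤ} (hy : IsBoolVec y) : IsBoolVec (gadgetRight m y) :=
  (IsBoolVec.one.sumElim hy.selfTensor.one_sub).sumElim ((hy.comp _).sumElim IsBoolVec.one)

theorem gadgetLeft_dotProduct_gadgetRight (x y : ι → ℤ) :
    gadgetLeft m x ⬝ᵥ gadgetRight m y = ((card ι : ℤ) + m) ^ 2 - (x ⬝ᵥ y - m) ^ 2 := by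
  rw [gadgetLeft, gadgetRight, sumElim_dotProduct_sumElim, complement_dotProduct_complement,
    selfTensor_dotProduct_selfTensor, sumElim_dotProduct_sumElim, comp_snd_dotProduct_comp_snd,
    one_dotProduct_one]
  simp only [card_prod, card_fin]
  push_cast
  ring

end Gadget

theorem stmt_8_general (d m : ℕ) :
    ∃ φx φy : (Fin d → ℤ) → (Fin (2 * (d ^ 2 + 4 * d * m)) → ℤ),
      (∀ x : Fin d → ℤ, (∀ i, x i = 0 ∨ x i = 1) →
        ∀ j, φx x j = 0 ∨ φx x j = 1) ∧
      (∀ y : Fin d → ℤ, (∀ i, y i = 0 ∨ y i = 1) →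
        ∀ j, φy y j = 0 ∨ φy y j = 1) ∧
      (∀ x y : Fin d → ℤ, (∀ i, x i = 0 ∨ x i = 1) → (∀ i, y i = 0 ∨ y i = 1) →
        ∑ j, φx x j * φy y j
          = ((d : ℤ) + m) ^ 2 - (∑ i, x i * y i - (m : ℤ)) ^ 2) ∧
      (∀ x y : Fin d → ℤ, (∀ i, x i = 0 ∨ x i = 1) → (∀ i, y i = 0 ∨ y i = 1) →
        ((∑ i, x i * y i = (m : ℤ) →
            ∑ j, φx x j * φy y j = ((d : ℤ) + m) ^ 2) ∧
         (∑ i, x i * y i ≠ (m : ℤ) →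
            ∑ j, φx x j * φy y j < ((d : ℤ) + m) ^ 2))) := by
  have hcard : card (GadgetIndex (Fin d) m ⊕ Fin (4 * d * m)) = 2 * (d ^ 2 + 4 * d * m) := by
    simp only [card_sum, card_prod, card_fin]
    ring
  let e := equivFinOfCardEq hcard
  have key (x y : Fin d → ℤ) : padZero e (gadgetLeft m x) ⬝ᵥ padZero e (gadgetRight m y) =
      ((d : ℤ) + m) ^ 2 - (x ⬝ᵥ y - m) ^ 2 := by
    rw [padZero_dotProduct_padZero, gadgetLeft_dotProduct_gadgetRight, card_fin]
  refine ⟨fun x => padZero e (gadgetLeft m x), fun y => padZero e (gadgetRight m y),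
    fun x hx => (IsBoolVec.gadgetLeft hx).padZero e, fun y hy => (IsBoolVec.gadgetRight hy).padZero e,
    fun x y _ _ => key x y, fun x y _ _ => ?_⟩
  refine ⟨fun h => ?_, fun h => ?_⟩
  · have hxy : x ⬝ᵥ y = m := h
    exact (key x y).trans (by rw [hxy, sub_self]; ring)
  · exact (key x y).trans_lt (sub_lt_self _ (sq_pos_of_ne_zero (sub_ne_zero.mpr h)))

theorem stmt_8 (d m : ℕ) (hd : 1 ≤ d) (hm : m ≤ d) :
    ∃ φx φy : (Fin d → ℤ) → (Fin (2 * (d ^ 2 + 4 * d * m)) → ℤ),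
      (∀ x : Fin d → ℤ, (∀ i, x i = 0 ∨ x i = 1) →
        ∀ j, φx x j = 0 ∨ φx x j = 1) ∧
      (∀ y : Fin d → ℤ, (∀ i, y i = 0 ∨ y i = 1) →
        ∀ j, φy y j = 0 ∨ φy y j = 1) ∧
      (∀ x y : Fin d → ℤ, (∀ i, x i = 0 ∨ x i = 1) → (∀ i, y i = 0 ∨ y i = 1) →
        ∑ j, φx x j * φy y j
          = ((d : ℤ) + m) ^ 2 - (∑ i, x i * y i - (m : ℤ)) ^ 2) ∧
      (∀ x y : Fin d → ℤ, (∀ i, x i = 0 ∨ x i = 1) → (∀ i, y i = 0 ∨ y i = 1) →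
        ((∑ i, x i * y i = (m : ℤ) →
            ∑ j, φx x j * φy y j = ((d : ℤ) + m) ^ 2) ∧
         (∑ i, x i * y i ≠ (m : ℤ) →
            ∑ j, φx x j * φy y j < ((d : ℤ) + m) ^ 2))) :=
  stmt_8_general d m
end

section
/- Let d ≥ 1 be an integer and x, y ∈ {0,1}^d. For 0 ≤ t ≤ d, let e^{[t]} ∈ {0,1}^d denote the vector whose first t coordinates are 1 and whose remaining coordinates are 0. Define p_x := x ∘ e^{[d−‖x‖₁]} ∘ e^{[0]} ∈ {0,1}^{3d} and q_y := y ∘ e^{[0]} ∘ e^{[d−‖y‖₁]} ∈ {0,1}^{3d}, where ∘ denotes concatenation of vectors. Then: (i) p_x and q_y each have exactly d coordinates equal to 1; (ii) p_x·q_y = x·y; and (iii) ‖p_x − q_y‖₁ = 2·(d − x·y). -/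
/-!
Each of the four quantities is a coordinatewise sum `∑ j, g (p_x j) (q_y j)` with `g 0 0 = 0`.
Splitting the `3d` coordinates into three blocks of length `d`, such a sum is
`∑ i, g (x i) (y i) + (d - ‖x‖₁) • g 1 0 + (d - ‖y‖₁) • g 0 1`: the padding blocks of `p_x` and
`q_y` never overlap. With `g a b = [a = 1]`, `a * b` and `|a - b|` this gives (i), (ii) and (iii),
using `|a - b| = a + b - 2ab` on `{0,1}`.
-/

open Finset

theorem sum_range_ite_lt {M : Type*} [AddCommMonoid M] {n t : ℕ} (ht : t ≤ n) (c : M) :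
    ∑ j ∈ range n, (if j < t then c else 0) = t • c := by
  rw [← sum_filter, sum_const, show (range n).filter (· < t) = range t by ext; simp; omega,
    card_range]

theorem sum_ite_eq_one_of_boolean {ι : Type*} (s : Finset ι) {x : ι → ℕ}
    (hx : ∀ i, x i = 0 ∨ x i = 1) : ∑ i ∈ s, (if x i = 1 then 1 else 0) = ∑ i ∈ s, x i :=
  sum_congr rfl fun i _ => by rcases hx i with h | h <;> simp [h]

theorem abs_natCast_sub_natCast_of_boolean {a b : ℕ} (ha : a = 0 ∨ a = 1) (hb : b = 0 ∨ b = 1) :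
    |(a : ℤ) - b| = a + b - 2 * (a * b) := by
  rcases ha with rfl | rfl <;> rcases hb with rfl | rfl <;> simp

section Embedding

variable {d : ℕ}

/-- `p_x` indexed by `ℕ`, so that `px j` in `stmt_10` is `embedP x j` definitionally. -/
def embedP (x : Fin d → ℕ) (j : ℕ) : ℕ :=
  if h : j < d then x ⟨j, h⟩ else if j < d + (d - ∑ i, x i) then 1 else 0

def embedQ (y : Fin d → ℕ) (j : ℕ) : ℕ :=
  if h : j < d then y ⟨j, h⟩
  else if j < 2 * d then 0
  else if j < 2 * d + (d - ∑ i, y i) then 1 else 0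

theorem embedP_of_lt (x : Fin d → ℕ) {j : ℕ} (h : j < d) : embedP x j = x ⟨j, h⟩ :=
  dif_pos h

theorem embedQ_of_lt (y : Fin d → ℕ) {j : ℕ} (h : j < d) : embedQ y j = y ⟨j, h⟩ :=
  dif_pos h

theorem embedP_add_left (x : Fin d → ℕ) (j : ℕ) :
    embedP x (d + j) = if j < d - ∑ i, x i then 1 else 0 := by
  simp only [embedP, dif_neg (by omega : ¬ d + j < d), Nat.add_lt_add_iff_left]

theorem embedQ_add_left (y : Fin d → ℕ) {j : ℕ} (h : j < d) : embedQ y (d + j) = 0 := by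
  simp only [embedQ, dif_neg (by omega : ¬ d + j < d), if_pos (by omega : d + j < 2 * d)]

theorem embedP_two_mul_add (x : Fin d → ℕ) (j : ℕ) : embedP x (2 * d + j) = 0 := by
  simp only [embedP, dif_neg (by omega : ¬ 2 * d + j < d), ite_eq_right_iff]
  omega

theorem embedQ_two_mul_add (y : Fin d → ℕ) (j : ℕ) :
    embedQ y (2 * d + j) = if j < d - ∑ i, y i then 1 else 0 := by
  simp only [embedQ, dif_neg (by omega : ¬ 2 * d + j < d), if_neg (by omega : ¬ 2 * d + j < 2 * d),
    Nat.add_lt_add_iff_left]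

theorem sum_embed {M : Type*} [AddCommMonoid M] (g : ℕ → ℕ → M) (hg : g 0 0 = 0)
    (x y : Fin d → ℕ) :
    ∑ j : Fin (3 * d), g (embedP x j) (embedQ y j)
      = ∑ i, g (x i) (y i) + (d - ∑ i, x i) • g 1 0 + (d - ∑ i, y i) • g 0 1 := by
  rw [Fin.sum_univ_eq_sum_range (fun j => g (embedP x j) (embedQ y j)),
    show 3 * d = d + d + d by ring, sum_range_add, sum_range_add, ← two_mul]
  congr 2
  · rw [← Fin.sum_univ_eq_sum_range (fun j => g (embedP x j) (embedQ y j))]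
    simp only [embedP_of_lt, embedQ_of_lt, Fin.is_lt]
  · rw [← sum_range_ite_lt (Nat.sub_le d _)]
    refine sum_congr rfl fun j hj => ?_
    rw [embedP_add_left, embedQ_add_left y (mem_range.1 hj)]
    split_ifs <;> simp [hg]
  · rw [← sum_range_ite_lt (Nat.sub_le d _)]
    refine sum_congr rfl fun j _ => ?_
    rw [embedP_two_mul_add, embedQ_two_mul_add]
    split_ifs <;> simp [hg]


theorem sum_le_of_boolean {x : Fin d → ℕ} (hx : ∀ i, x i = 0 ∨ x i = 1) : ∑ i, x i ≤ d := by
  simpa using sum_le_card_nsmul univ x 1 fun i _ => by rcases hx i with h | h <;> simp [h]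

theorem card_embedP_eq_one {x : Fin d → ℕ} (hx : ∀ i, x i = 0 ∨ x i = 1) :
    #{j : Fin (3 * d) | embedP x j = 1} = d := by
  rw [card_filter, sum_embed (fun a _ => if a = 1 then 1 else 0) rfl x x,
    sum_ite_eq_one_of_boolean _ hx]
  have := sum_le_of_boolean hx
  simp only [if_pos, smul_eq_mul, mul_one, zero_ne_one, if_false, mul_zero, add_zero]
  omega

theorem card_embedQ_eq_one {y : Fin d → ℕ} (hy : ∀ i, y i = 0 ∨ y i = 1) :
    #{j : Fin (3 * d) | embedQ y j = 1} = d := by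
  rw [card_filter, sum_embed (fun _ b => if b = 1 then 1 else 0) rfl y y,
    sum_ite_eq_one_of_boolean _ hy]
  have := sum_le_of_boolean hy
  simp only [if_pos, smul_eq_mul, mul_one, zero_ne_one, if_false, mul_zero, add_zero]
  omega

theorem sum_embedP_mul_embedQ (x y : Fin d → ℕ) :
    ∑ j : Fin (3 * d), embedP x j * embedQ y j = ∑ i, x i * y i := by
  simpa using sum_embed (fun a b => a * b) rfl x y

theorem sum_abs_embedP_sub_embedQ {x y : Fin d → ℕ} (hx : ∀ i, x i = 0 ∨ x i = 1)
    (hy : ∀ i, y i = 0 ∨ y i = 1) :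
    ∑ j : Fin (3 * d), |(embedP x j : ℤ) - embedQ y j| = 2 * ((d : ℤ) - ∑ i, (x i : ℤ) * y i) := by
  have hxy : ∑ i, |(x i : ℤ) - y i| = ∑ i, (x i : ℤ) + ∑ i, (y i : ℤ) - 2 * ∑ i, (x i : ℤ) * y i := by
    simp only [abs_natCast_sub_natCast_of_boolean (hx _) (hy _), sum_sub_distrib, sum_add_distrib, mul_sum]
  rw [sum_embed (fun a b => |(a : ℤ) - b|) (by simp) x y, hxy]
  simp only [Nat.cast_one, Nat.cast_zero, sub_zero, zero_sub, abs_neg, abs_one, nsmul_eq_mul,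
    mul_one, Nat.cast_sub (sum_le_of_boolean hx), Nat.cast_sub (sum_le_of_boolean hy), Nat.cast_sum]
  ring

end Embedding

theorem stmt_10_general (d : ℕ) (x y : Fin d → ℕ)
    (hx : ∀ i, x i = 0 ∨ x i = 1) (hy : ∀ i, y i = 0 ∨ y i = 1) :
    -- p_x = x ∘ e^[d - ‖x‖₁] ∘ e^[0],  q_y = y ∘ e^[0] ∘ e^[d - ‖y‖₁]
    let px : Fin (3 * d) → ℕ := fun j =>
      if h : (j : ℕ) < d then x ⟨j, h⟩
      else if (j : ℕ) < d + (d - ∑ i, x i) then 1 else 0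
    let qy : Fin (3 * d) → ℕ := fun j =>
      if h : (j : ℕ) < d then y ⟨j, h⟩
      else if (j : ℕ) < 2 * d then 0
      else if (j : ℕ) < 2 * d + (d - ∑ i, y i) then 1 else 0
    -- (i) exactly d ones each, (ii) inner product preserved, (iii) ℓ₁ distance
    ((Finset.univ.filter fun j => px j = 1).card = d ∧
     (Finset.univ.filter fun j => qy j = 1).card = d ∧
     ∑ j, px j * qy j = ∑ i, x i * y i ∧
     ∑ j, |(px j : ℤ) - (qy j : ℤ)|
        = 2 * ((d : ℤ) - ∑ i, (x i : ℤ) * (y i : ℤ))) :=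
  ⟨card_embedP_eq_one hx, card_embedQ_eq_one hy, sum_embedP_mul_embedQ x y,
    sum_abs_embedP_sub_embedQ hx hy⟩

theorem stmt_10 (d : ℕ) (hd : 1 ≤ d) (x y : Fin d → ℕ)
    (hx : ∀ i, x i = 0 ∨ x i = 1) (hy : ∀ i, y i = 0 ∨ y i = 1) :
    -- p_x = x ∘ e^[d - ‖x‖₁] ∘ e^[0],  q_y = y ∘ e^[0] ∘ e^[d - ‖y‖₁]
    let px : Fin (3 * d) → ℕ := fun j =>
      if h : (j : ℕ) < d then x ⟨j, h⟩
      else if (j : ℕ) < d + (d - ∑ i, x i) then 1 else 0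
    let qy : Fin (3 * d) → ℕ := fun j =>
      if h : (j : ℕ) < d then y ⟨j, h⟩
      else if (j : ℕ) < 2 * d then 0
      else if (j : ℕ) < 2 * d + (d - ∑ i, y i) then 1 else 0
    -- (i) exactly d ones each, (ii) inner product preserved, (iii) ℓ₁ distance
    ((Finset.univ.filter fun j => px j = 1).card = d ∧
     (Finset.univ.filter fun j => qy j = 1).card = d ∧
     ∑ j, px j * qy j = ∑ i, x i * y i ∧
     ∑ j, |(px j : ℤ) - (qy j : ℤ)|
        = 2 * ((d : ℤ) - ∑ i, (x i : ℤ) * (y i : ℤ))) :=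
  stmt_10_general d x y hx hy
end
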